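/- For every integer k ≥ 1, every k-tree G admits a unique partition of its vertex set V(G) into k+1 independent sets. -/
import Mathlib


/-- A drawing (embedding) of a simple graph in the plane `ℝ × ℝ` without crossings:
vertices are mapped to distinct points, each edge to an injective arc joining its
endpoints, arcs pass through no other vertex, and two arcs of distinct edges meet
only in common endpoints. -/
structure PlaneEmbedding {V : Type} (G : SimpleGraph V) where
  vtx : V → ℝ × ℝ
  vtx_inj : Function.Injective vtx
  arc : ∀ ⦃u v : V⦄, G.Adj u v → Set (ℝ × ℝ)
  arc_symm : ∀ ⦃u v : V⦄ (h : G.Adj u v), arc h.symm = arc h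
  arc_path : ∀ ⦃u v : V⦄ (h : G.Adj u v),
    ∃ γ : Path (vtx u) (vtx v), Function.Injective ⇑γ ∧ Set.range ⇑γ = arc h
  arc_vtx : ∀ ⦃u v : V⦄ (h : G.Adj u v) (w : V), vtx w ∈ arc h → w = u ∨ w = v
  arc_inter : ∀ ⦃u v a b : V⦄ (h₁ : G.Adj u v) (h₂ : G.Adj a b), s(u, v) ≠ s(a, b) →
    arc h₁ ∩ arc h₂ ⊆ ({vtx u, vtx v} : Set (ℝ × ℝ)) ∩ {vtx a, vtx b}

namespace PlaneEmbedding

variable {V : Type} {G : SimpleGraph V}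

/-- The point set of the sub-drawing determined by the vertices in `S`
(the inherited embedding of the induced subgraph on `S`). -/
def subSupport (E : PlaneEmbedding G) (S : Set V) : Set (ℝ × ℝ) :=
  E.vtx '' S ∪ ⋃ (u : V) (_ : u ∈ S) (v : V) (_ : v ∈ S) (h : G.Adj u v), E.arc h

/-- The induced subgraph on `S`, with the inherited embedding, is an outerplane graph:
every vertex of `S` lies on the boundary of the outer (unbounded) face, i.e. in the
closure of the set of points belonging to unbounded faces of the sub-drawing. -/
def OuterplaneOn (E : PlaneEmbedding G) (S : Set V) : Prop :=
  ∀ v ∈ S, E.vtx v ∈ closure {p | p ∉ E.subSupport S ∧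
    ¬ Bornology.IsBounded (connectedComponentIn (E.subSupport S)ᶜ p)}

/-- The whole drawing is an outerplane graph. -/
def IsOuterplane (E : PlaneEmbedding G) : Prop := E.OuterplaneOn Set.univ

end PlaneEmbedding

/-- A graph is planar if it admits a plane embedding. -/
def IsPlanar {V : Type} (G : SimpleGraph V) : Prop := Nonempty (PlaneEmbedding G)

/-- A graph is outerplanar if it admits a plane embedding with all vertices on the
boundary of the outer face. -/
def IsOuterplanar {V : Type} (G : SimpleGraph V) : Prop :=
  ∃ E : PlaneEmbedding G, E.IsOuterplane

/-- A plane triangulation is an edge-maximal (finite) planar graph. -/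
def IsPlaneTriangulation {V : Type} (G : SimpleGraph V) : Prop :=
  IsPlanar G ∧ ∀ u v : V, u ≠ v → ¬ G.Adj u v →
    ¬ IsPlanar (G ⊔ SimpleGraph.fromEdgeSet {s(u, v)})

/-- `G` has a `K_m`-minor: there are `m` pairwise disjoint nonempty connected branch
sets with an edge between any two of them. -/
def HasCliqueMinor {V : Type} (G : SimpleGraph V) (m : ℕ) : Prop :=
  ∃ B : Fin m → Set V,
    (∀ i, (B i).Nonempty) ∧
    (∀ i, (G.induce (B i)).Connected) ∧
    (∀ i j, i ≠ j → Disjoint (B i) (B j)) ∧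
    (∀ i j, i ≠ j → ∃ u ∈ B i, ∃ v ∈ B j, G.Adj u v)

/-- `G` is `K₄`-minor free. -/
def K4MinorFree {V : Type} (G : SimpleGraph V) : Prop := ¬ HasCliqueMinor G 4

/-- `s_{o'}(G)` for a fixed plane embedding of `G`: the maximum order of an induced
subgraph whose inherited embedding is an outerplane graph. -/
noncomputable def sO' {V : Type} [Fintype V] {G : SimpleGraph V}
    (E : PlaneEmbedding G) : ℕ :=
  sSup {n | ∃ S : Finset V, E.OuterplaneOn ↑S ∧ S.card = n}

/-- `s_o(G)`: the maximum order of an induced outerplanar subgraph of `G`. -/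
noncomputable def sO {V : Type} [Fintype V] (G : SimpleGraph V) : ℕ :=
  sSup {n | ∃ S : Finset V, IsOuterplanar (G.induce (↑S : Set V)) ∧ S.card = n}

/-- `s_{K₄}(G)`: the maximum order of an induced `K₄`-minor-free subgraph of `G`. -/
noncomputable def sK4 {V : Type} [Fintype V] (G : SimpleGraph V) : ℕ :=
  sSup {n | ∃ S : Finset V, K4MinorFree (G.induce (↑S : Set V)) ∧ S.card = n}

/-- `tw(G) ≤ k`: `G` admits a tree decomposition of width at most `k`. -/
def TreewidthLE {V : Type} (G : SimpleGraph V) (k : ℕ) : Prop :=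
  ∃ (ι : Type) (T : SimpleGraph ι) (bag : ι → Set V),
    T.IsTree ∧
    (∀ v : V, ∃ i, v ∈ bag i) ∧
    (∀ u v : V, G.Adj u v → ∃ i, u ∈ bag i ∧ v ∈ bag i) ∧
    (∀ v : V, (T.induce {i | v ∈ bag i}).Connected) ∧
    (∀ i, (bag i).ncard ≤ k + 1)

/-- `G` is a `k`-tree: its vertices admit a construction order in which the first
`k+1` vertices form a complete graph and every later vertex is joined to exactly
`k` earlier, pairwise adjacent, vertices. -/
def IsKTree (k : ℕ) {V : Type} (G : SimpleGraph V) : Prop :=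
  ∃ (n : ℕ) (e : Fin n ≃ V), k + 1 ≤ n ∧
    (∀ i j : Fin n, (i : ℕ) < k + 1 → (j : ℕ) < k + 1 → i ≠ j → G.Adj (e i) (e j)) ∧
    (∀ j : Fin n, k + 1 ≤ (j : ℕ) →
      {i : Fin n | i < j ∧ G.Adj (e i) (e j)}.ncard = k ∧
      (∀ i i' : Fin n, i < j → i' < j → G.Adj (e i) (e j) → G.Adj (e i') (e j) →
        i ≠ i' → G.Adj (e i) (e i')))

/-- `S` is a dominating set of `G`. -/
def IsDomSet {V : Type} (G : SimpleGraph V) (S : Set V) : Prop :=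
  ∀ v : V, v ∈ S ∨ ∃ u ∈ S, G.Adj u v

/-- `S` is a connected dominating set of `G`. -/
def IsConnDomSet {V : Type} (G : SimpleGraph V) (S : Set V) : Prop :=
  IsDomSet G S ∧ (G.induce S).Connected

/-- The domination number `γ(G)`. -/
noncomputable def domNum {V : Type} [Fintype V] (G : SimpleGraph V) : ℕ :=
  sInf {n | ∃ S : Finset V, IsDomSet G ↑S ∧ S.card = n}

/-- The connected domination number `γ_c(G)`. -/
noncomputable def connDomNum {V : Type} [Fintype V] (G : SimpleGraph V) : ℕ :=
  sInf {n | ∃ S : Finset V, IsConnDomSet G ↑S ∧ S.card = n}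

/-- A graph is Eulerian if every vertex has even degree. -/
def IsEulerian {V : Type} (G : SimpleGraph V) : Prop :=
  ∀ v : V, Even (G.neighborSet v).ncard

/-- `G` contains a subgraph isomorphic to `H`. -/
def ContainsCopy {W V : Type} (H : SimpleGraph W) (G : SimpleGraph V) : Prop :=
  ∃ f : H →g G, Function.Injective ⇑f

/-- The complete tripartite graph `K_{1,1,3}`. -/
def K113 : SimpleGraph (Fin 5) :=
  SimpleGraph.fromEdgeSet {s(0, 1), s(0, 2), s(0, 3), s(0, 4), s(1, 2), s(1, 3), s(1, 4)}

/-- `G` is a maximal outerplanar graph. -/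
def IsMaximalOuterplanar {V : Type} (G : SimpleGraph V) : Prop :=
  IsOuterplanar G ∧ ∀ u v : V, u ≠ v → ¬ G.Adj u v →
    ¬ IsOuterplanar (G ⊔ SimpleGraph.fromEdgeSet {s(u, v)})


open Classical in
noncomputable def ktColor (k n : ℕ) (A : Fin n → Fin n → Prop) : Fin n → Fin (k + 1) :=
  fun j =>
    if h : (j : ℕ) < k + 1 then ⟨j, h⟩
    else
      if h2 : ∃ c : Fin (k + 1),
          c ∉ (Finset.univ.filter (fun i : Fin n => i < j ∧ A i j)).attach.image
            (fun i => ktColor k n A i.1) then h2.choose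
      else ⟨0, Nat.succ_pos k⟩
  termination_by j => (j : ℕ)
  decreasing_by
    all_goals exact Fin.lt_def.mp (Finset.mem_filter.mp i.2).2.1

open Classical in
lemma ktColor_lt (k n : ℕ) (A : Fin n → Fin n → Prop) (j : Fin n) (h : (j : ℕ) < k + 1) :
    ktColor k n A j = ⟨j, h⟩ := by
  rw [ktColor, dif_pos h]

open Classical in
lemma ktColor_spec (k n : ℕ) (A : Fin n → Fin n → Prop) (j : Fin n) (hj : ¬ (j : ℕ) < k + 1)
    (hcard : (Finset.univ.filter (fun i : Fin n => i < j ∧ A i j)).card ≤ k) :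
    ∀ i : Fin n, i < j → A i j → ktColor k n A i ≠ ktColor k n A j := by
  intro i hi hA
  have hmem : i ∈ Finset.univ.filter (fun i : Fin n => i < j ∧ A i j) := by
    simp [hi, hA]
  have hScard : ((Finset.univ.filter (fun i : Fin n => i < j ∧ A i j)).attach.image
      (fun i => ktColor k n A i.1)).card ≤ k := by
    refine le_trans Finset.card_image_le ?_
    simpa using hcard
  have h2 : ∃ c : Fin (k + 1),
      c ∉ (Finset.univ.filter (fun i : Fin n => i < j ∧ A i j)).attach.image
        (fun i => ktColor k n A i.1) := by
    by_contra hno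
    push_neg at hno
    have : (Finset.univ : Finset (Fin (k + 1))).card ≤ _ :=
      Finset.card_le_card (fun c _ => hno c)
    simp only [Finset.card_univ, Fintype.card_fin] at this
    omega
  have hji : ktColor k n A j = h2.choose := by
    rw [ktColor, dif_neg hj, dif_pos h2]
  have hmemS : ktColor k n A i ∈ (Finset.univ.filter (fun i : Fin n => i < j ∧ A i j)).attach.image
      (fun i => ktColor k n A i.1) :=
    Finset.mem_image.mpr ⟨⟨i, hmem⟩, Finset.mem_attach _ _, rfl⟩
  rw [hji]
  intro hEq
  exact h2.choose_spec (hEq ▸ hmemS)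
/-- For every `k ≥ 1`, every `k`-tree admits a unique partition of its
vertex set into `k+1` independent sets (i.e. a proper `(k+1)`-coloring exists, and any
two such colorings have the same family of color classes). -/
theorem stmt1 (k : ℕ) (hk : 1 ≤ k) (V : Type) (G : SimpleGraph V) (hG : IsKTree k G) :
    (∃ c : V → Fin (k + 1), ∀ u v : V, G.Adj u v → c u ≠ c v) ∧
    (∀ c₁ c₂ : V → Fin (k + 1),
      (∀ u v : V, G.Adj u v → c₁ u ≠ c₁ v) →
      (∀ u v : V, G.Adj u v → c₂ u ≠ c₂ v) →
      Set.range (fun i => c₁ ⁻¹' {i}) = Set.range (fun i => c₂ ⁻¹' {i})) := by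
  classical
  obtain ⟨n, e, hn, hclique, hstep⟩ := hG
  have hcard' : ∀ j : Fin n, k + 1 ≤ (j : ℕ) →
      (Finset.univ.filter (fun i : Fin n => i < j ∧ G.Adj (e i) (e j))).card ≤ k := by
    intro j hj
    have h := (hstep j hj).1
    rw [Set.ncard_eq_toFinset_card'] at h
    rw [← h]
    apply le_of_eq
    congr 1
    ext i
    simp
  constructor
  · -- existence
    refine ⟨fun v => ktColor k n (fun i j => G.Adj (e i) (e j)) (e.symm v), ?_⟩
    intro u v huv hEq
    set A : Fin n → Fin n → Prop := fun i j => G.Adj (e i) (e j) with hA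
    have key : ∀ i j : Fin n, i < j → A i j → ktColor k n A i ≠ ktColor k n A j := by
      intro i j hij hAij
      by_cases hjk : (j : ℕ) < k + 1
      · have hik : (i : ℕ) < k + 1 := lt_trans hij hjk
        rw [ktColor_lt k n A i hik, ktColor_lt k n A j hjk]
        intro hc
        rw [Fin.mk.injEq] at hc
        have : (i : ℕ) < (j : ℕ) := hij
        omega
      · exact ktColor_spec k n A j hjk (hcard' j (le_of_not_gt hjk)) i hij hAij
    have hAuv : A (e.symm u) (e.symm v) := by
      simp only [hA, Equiv.apply_symm_apply]; exact huv
    have hAvu : A (e.symm v) (e.symm u) := by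
      simp only [hA, Equiv.apply_symm_apply]; exact huv.symm
    have hne : e.symm u ≠ e.symm v := by
      intro h; exact G.ne_of_adj huv (by simpa using congrArg e h)
    rcases lt_or_gt_of_ne hne with h | h
    · exact key _ _ h hAuv hEq
    · exact key _ _ h hAvu hEq.symm
  · -- uniqueness
    intro c₁ c₂ h₁ h₂
    set emb : Fin (k + 1) → Fin n := fun m => ⟨m, lt_of_lt_of_le m.2 hn⟩ with hemb
    have embinj : Function.Injective emb := by
      intro a b hab
      have h' := congrArg Fin.val hab
      exact Fin.ext h'
    have bbij : ∀ c : V → Fin (k + 1), (∀ u v : V, G.Adj u v → c u ≠ c v) →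
        Function.Bijective (fun m => c (e (emb m))) := by
      intro c hc
      have hinj : Function.Injective (fun m => c (e (emb m))) := by
        intro a b hab
        by_contra hne
        exact hc _ _ (hclique (emb a) (emb b) a.2 b.2 (fun h => hne (embinj h))) hab
      exact Finite.injective_iff_bijective.mp hinj
    set σ : Fin (k + 1) ≃ Fin (k + 1) :=
      (Equiv.ofBijective _ (bbij c₁ h₁)).symm.trans (Equiv.ofBijective _ (bbij c₂ h₂)) with hσ
    have hσb : ∀ m : Fin (k + 1), σ (c₁ (e (emb m))) = c₂ (e (emb m)) :=
      fun m =>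
        calc σ (c₁ (e (emb m)))
            = (Equiv.ofBijective _ (bbij c₂ h₂))
                ((Equiv.ofBijective _ (bbij c₁ h₁)).symm
                  ((Equiv.ofBijective _ (bbij c₁ h₁)) m)) := rfl
          _ = c₂ (e (emb m)) := by rw [Equiv.symm_apply_apply]; rfl
    have key : ∀ m : ℕ, ∀ j : Fin n, (j : ℕ) = m → c₂ (e j) = σ (c₁ (e j)) := by
      intro m
      induction m using Nat.strong_induction_on with
      | _ m IH =>
        intro j hjm
        by_cases hjk : (j : ℕ) < k + 1
        · have hje : j = emb ⟨(j : ℕ), hjk⟩ := Fin.ext rfl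
          rw [hje]
          exact (hσb _).symm
        · obtain ⟨hcard, hcl⟩ := hstep j (le_of_not_gt hjk)
          set N : Set (Fin n) := {i | i < j ∧ G.Adj (e i) (e j)} with hN
          have injOn : ∀ c : V → Fin (k + 1), (∀ u v : V, G.Adj u v → c u ≠ c v) →
              Set.InjOn (fun i => c (e i)) N := by
            intro c hc i hi i' hi' hii'
            by_contra hne
            exact hc _ _ (hcl i i' hi.1 hi'.1 hi.2 hi'.2 hne) hii'
          have hnm : ∀ c : V → Fin (k + 1), (∀ u v : V, G.Adj u v → c u ≠ c v) →
              c (e j) ∉ (fun i => c (e i)) '' N := by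
            intro c hc hmem
            obtain ⟨i, hi, hie⟩ := hmem
            exact hc _ _ hi.2 hie
          have hT₂eq : (fun i => c₂ (e i)) '' N = σ '' ((fun i => c₁ (e i)) '' N) := by
            rw [Set.image_image]
            apply Set.image_congr
            intro i hi
            have hilt : (i : ℕ) < m := hjm ▸ (Fin.lt_def.mp hi.1)
            exact IH (i : ℕ) hilt i rfl
          have hT₂card : ((fun i => c₂ (e i)) '' N).ncard = k := by
            rw [Set.ncard_image_of_injOn (injOn c₂ h₂), hcard]
          have hcompl : ((fun i => c₂ (e i)) '' N)ᶜ.ncard = 1 := by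
            have := Set.ncard_add_ncard_compl ((fun i => c₂ (e i)) '' N)
            rw [hT₂card] at this
            simp only [Nat.card_eq_fintype_card, Fintype.card_fin] at this
            omega
          obtain ⟨a, ha⟩ := Set.ncard_eq_one.mp hcompl
          have h1 : c₂ (e j) ∈ ((fun i => c₂ (e i)) '' N)ᶜ := hnm c₂ h₂
          have h2 : σ (c₁ (e j)) ∈ ((fun i => c₂ (e i)) '' N)ᶜ := by
            rw [hT₂eq]
            intro hmem
            obtain ⟨x, hx, hxe⟩ := hmem
            exact hnm c₁ h₁ (σ.injective hxe ▸ hx)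
          rw [ha] at h1 h2
          rw [h1, h2]
    have hall : ∀ v : V, c₂ v = σ (c₁ v) := by
      intro v
      have := key ((e.symm v : Fin n) : ℕ) (e.symm v) rfl
      simpa using this
    ext X
    simp only [Set.mem_range]
    constructor
    · rintro ⟨i, rfl⟩
      refine ⟨σ i, ?_⟩
      ext v
      simp only [Set.mem_preimage, Set.mem_singleton_iff, hall v]
      exact σ.apply_eq_iff_eq
    · rintro ⟨i, rfl⟩
      refine ⟨σ.symm i, ?_⟩
      ext v
      simp only [Set.mem_preimage, Set.mem_singleton_iff, hall v]
      exact (Equiv.apply_eq_iff_eq_symm_apply σ).symm
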